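/- arXiv:2603.28574 — 3 statements merged into one kernel-verified Lean document; each statement's English description precedes it below -/
import Mathlib

section
/- Let X be a ranking over a finite set C, let C' ⊆ C, C'' = C \ C', and let R be a ranking over C'. If R̂ is an extension of R to C (a ranking over C whose restriction to C' equals R) minimizing KT(X, R̂) over all extensions of R, then R̂ agrees with X on every pair of candidates from C'': for all c, c' ∈ C'', c precedes c' in R̂ if and only if c precedes c' in X. -/
/-- Kendall tau distance between rankings `π π' : Fin n ≃ C`. -/
def KT {n : ℕ} {C : Type} [Fintype C] (π π' : Fin n ≃ C) : ℕ :=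
  ((Finset.univ : Finset (C × C)).filter
    (fun p => π.symm p.1 < π.symm p.2 ∧ π'.symm p.2 < π'.symm p.1)).card

/-- `S : Fin n ≃ C` is an extension of the ranking `R` over `C' ⊆ C`:
its restriction to `C'` (as an ordering) equals `R`. -/
def IsExtension {n : ℕ} {C : Type} [Fintype C] [DecidableEq C] (C' : Finset C)
    (R : Fin C'.card ≃ {x : C // x ∈ C'}) (S : Fin n ≃ C) : Prop :=
  ∀ a b : {x : C // x ∈ C'}, (R.symm a < R.symm b ↔ S.symm (a : C) < S.symm (b : C))

/-- Key pointwise bound: for the "swap `c` and `c'`" modification of a ranking,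
the change in discordance on the pair `p` plus the change on the swapped pair
is at most `0`, and at most `-1` on the pair `(c, c')` (or `(c', c)`) itself.
Here `x` gives positions in `X`, `u` positions in the original ranking, `v`
positions in the modified ranking, and `sw` is the transposition of `c, c'`. -/
lemma pair_bound {α : Type} [DecidableEq α] (x u v : α → ℕ) (sw : α → α) (c c' : α)
    (hcc' : c ≠ c') (hx : x c' < x c) (hu : u c < u c')
    (hvc : v c = u c') (hvc' : v c' = u c) (hvy : ∀ y, y ≠ c → y ≠ c' → v y = u y)
    (hswc : sw c = c') (hswc' : sw c' = c) (hswy : ∀ y, y ≠ c → y ≠ c' → sw y = y)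
    (p : α × α) :
    ((if x p.1 < x p.2 ∧ v p.2 < v p.1 then (1:ℤ) else 0)
      - (if x p.1 < x p.2 ∧ u p.2 < u p.1 then (1:ℤ) else 0))
    + ((if x (sw p.1) < x (sw p.2) ∧ v (sw p.2) < v (sw p.1) then (1:ℤ) else 0)
      - (if x (sw p.1) < x (sw p.2) ∧ u (sw p.2) < u (sw p.1) then (1:ℤ) else 0))
    ≤ (if p = (c, c') ∨ p = (c', c) then (-1:ℤ) else 0) := by
  obtain ⟨a, b⟩ := p
  have hcc2 : c' ≠ c := Ne.symm hcc'
  simp only [Prod.mk.injEq]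
  by_cases hac : a = c
  · by_cases hbc' : b = c'
    · rw [if_pos (Or.inl ⟨hac, hbc'⟩)]
      rw [hac, hbc', hswc, hswc', hvc, hvc']
      split_ifs <;> omega
    · by_cases hbc : b = c
      · rw [if_neg (by simp [hac, hbc, hcc', hcc2] : ¬((a = c ∧ b = c') ∨ (a = c' ∧ b = c)))]
        rw [hac, hbc, hswc, hvc, hvc']
        split_ifs <;> omega
      · rw [if_neg (by simp [hbc', hbc] : ¬((a = c ∧ b = c') ∨ (a = c' ∧ b = c)))]
        rw [hac, hswc, hswy b hbc hbc', hvc, hvc', hvy b hbc hbc']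
        split_ifs <;> omega
  · by_cases hac' : a = c'
    · by_cases hbc : b = c
      · rw [if_pos (Or.inr ⟨hac', hbc⟩)]
        rw [hac', hbc, hswc, hswc', hvc, hvc']
        split_ifs <;> omega
      · by_cases hbc' : b = c'
        · rw [if_neg (by simp [hac, hbc] : ¬((a = c ∧ b = c') ∨ (a = c' ∧ b = c)))]
          rw [hac', hbc', hswc', hvc, hvc']
          split_ifs <;> omega
        · rw [if_neg (by simp [hac, hbc] : ¬((a = c ∧ b = c') ∨ (a = c' ∧ b = c)))]
          rw [hac', hswc', hswy b hbc hbc', hvc, hvc', hvy b hbc hbc']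
          split_ifs <;> omega
    · by_cases hbc : b = c
      · rw [if_neg (by simp [hac, hac'] : ¬((a = c ∧ b = c') ∨ (a = c' ∧ b = c)))]
        rw [hbc, hswc, hswy a hac hac', hvc, hvc', hvy a hac hac']
        split_ifs <;> omega
      · by_cases hbc' : b = c'
        · rw [if_neg (by simp [hac, hac'] : ¬((a = c ∧ b = c') ∨ (a = c' ∧ b = c)))]
          rw [hbc', hswc', hswy a hac hac', hvc, hvc', hvy a hac hac']
          split_ifs <;> omega
        · rw [if_neg (by simp [hac, hac'] : ¬((a = c ∧ b = c') ∨ (a = c' ∧ b = c)))]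
          rw [hswy a hac hac', hswy b hbc hbc', hvy a hac hac', hvy b hbc hbc']
          split_ifs <;> omega

/-- `KT` as an integer-valued sum over all pairs, with positions compared
as natural numbers. -/
lemma KT_eq_sum {n : ℕ} {C : Type} [Fintype C] (X S : Fin n ≃ C) :
    (KT X S : ℤ) = ∑ p : C × C,
      (if (X.symm p.1).1 < (X.symm p.2).1 ∧ (S.symm p.2).1 < (S.symm p.1).1
        then (1:ℤ) else 0) := by
  rw [KT, Finset.card_filter]
  push_cast
  refine Finset.sum_congr rfl fun p _ => ?_
  exact if_congr (and_congr Fin.lt_def Fin.lt_def) rfl rfl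

/-- If `Rhat` is an optimal extension of a ranking `R` over `C' ⊆ C`
(minimizing the Kendall tau distance to `X` over all extensions of `R`),
then `Rhat` agrees with `X` on every pair of candidates from `C'' = C \ C'`. -/
theorem optimal_extension_agrees_outside {n : ℕ} {C : Type} [Fintype C] [DecidableEq C]
    (X : Fin n ≃ C) (C' : Finset C) (R : Fin C'.card ≃ {x : C // x ∈ C'})
    (Rhat : Fin n ≃ C)
    (hext : IsExtension C' R Rhat)
    (hopt : ∀ S : Fin n ≃ C, IsExtension C' R S → KT X Rhat ≤ KT X S) :
    ∀ c ∉ C', ∀ c' ∉ C',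
      (Rhat.symm c < Rhat.symm c' ↔ X.symm c < X.symm c') := by
  have key : ∀ c ∉ C', ∀ c' ∉ C',
      Rhat.symm c < Rhat.symm c' → X.symm c < X.symm c' := by
    intro c hc c' hc' hR
    by_contra hX
    have hcc' : c ≠ c' := by rintro rfl; exact lt_irrefl _ hR
    have hX' : X.symm c' < X.symm c := by
      rcases lt_trichotomy (X.symm c) (X.symm c') with h | h | h
      · exact absurd h hX
      · exact absurd (X.symm.injective h) hcc'
      · exact h
    -- the swapped ranking
    let S3 : Fin n ≃ C := (Equiv.swap (Rhat.symm c) (Rhat.symm c')).trans Rhat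
    have hS3symm : ∀ y : C,
        S3.symm y = Equiv.swap (Rhat.symm c) (Rhat.symm c') (Rhat.symm y) := by
      intro y; simp [S3, Equiv.symm_trans_apply]
    have hne_i : ∀ y : C, y ≠ c → Rhat.symm y ≠ Rhat.symm c := by
      intro y h hy; exact h (Rhat.symm.injective hy)
    have hne_j : ∀ y : C, y ≠ c' → Rhat.symm y ≠ Rhat.symm c' := by
      intro y h hy; exact h (Rhat.symm.injective hy)
    have hS3c : S3.symm c = Rhat.symm c' := by
      rw [hS3symm, Equiv.swap_apply_left]
    have hS3c' : S3.symm c' = Rhat.symm c := by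
      rw [hS3symm, Equiv.swap_apply_right]
    have hS3y : ∀ y : C, y ≠ c → y ≠ c' → S3.symm y = Rhat.symm y := by
      intro y h1 h2
      rw [hS3symm, Equiv.swap_apply_of_ne_of_ne (hne_i y h1) (hne_j y h2)]
    have hext3 : IsExtension C' R S3 := by
      intro a b
      rw [hext a b,
        hS3y _ (fun h => hc (h ▸ a.2)) (fun h => hc' (h ▸ a.2)),
        hS3y _ (fun h => hc (h ▸ b.2)) (fun h => hc' (h ▸ b.2))]
    -- abbreviations: positions as naturals
    set x : C → ℕ := fun y => (X.symm y).1 with hxdef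
    set u : C → ℕ := fun y => (Rhat.symm y).1 with hudef
    set v : C → ℕ := fun y => (S3.symm y).1 with hvdef
    set sw : C → C := fun y => Equiv.swap c c' y with hswdef
    set D : C × C → ℤ := fun p =>
      (if x p.1 < x p.2 ∧ v p.2 < v p.1 then (1:ℤ) else 0)
      - (if x p.1 < x p.2 ∧ u p.2 < u p.1 then (1:ℤ) else 0) with hDdef
    have hpt : ∀ p : C × C, D p + D (sw p.1, sw p.2)
        ≤ (if p = (c, c') ∨ p = (c', c) then (-1:ℤ) else 0) := by
      intro p
      exact pair_bound x u v sw c c' hcc' hX' hR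
        (by simp [hvdef, hudef, hS3c]) (by simp [hvdef, hudef, hS3c'])
        (fun y h1 h2 => by simp [hvdef, hudef, hS3y y h1 h2])
        (by simp [hswdef]) (by simp [hswdef])
        (fun y h1 h2 => by
          simp [hswdef, Equiv.swap_apply_of_ne_of_ne h1 h2])
        p
    -- sum of the swapped terms equals the original sum
    have hφsum : ∑ p : C × C, D (sw p.1, sw p.2) = ∑ p : C × C, D p := by
      have := Equiv.sum_comp
        (Equiv.prodCongr (Equiv.swap c c') (Equiv.swap c c')) D
      simpa [hswdef, Equiv.prodCongr_apply, Prod.map] using this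
    have hsum3 : ∑ p : C × C,
        (if p = (c, c') ∨ p = (c', c) then (-1:ℤ) else 0) = -2 := by
      have hne : ((c, c') : C × C) ≠ ((c', c) : C × C) := by
        simp [Prod.ext_iff]
        intro h; exact absurd h hcc'
      have hptw : ∀ p : C × C, (if p = (c, c') ∨ p = (c', c) then (-1:ℤ) else 0)
          = (if p = (c, c') then (-1:ℤ) else 0)
            + (if p = (c', c) then (-1:ℤ) else 0) := by
        intro p
        by_cases h1 : p = (c, c')
        · rw [if_pos (Or.inl h1), if_pos h1, if_neg (by rw [h1]; exact hne)]
          norm_num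
        · by_cases h2 : p = (c', c)
          · rw [if_pos (Or.inr h2), if_neg h1, if_pos h2]
            norm_num
          · rw [if_neg (by tauto), if_neg h1, if_neg h2]
            norm_num
      rw [Finset.sum_congr rfl (fun p _ => hptw p), Finset.sum_add_distrib,
        Finset.sum_ite_eq' Finset.univ ((c, c') : C × C) (fun _ => (-1:ℤ)),
        Finset.sum_ite_eq' Finset.univ ((c', c) : C × C) (fun _ => (-1:ℤ))]
      simp
    have hsum2 : (2:ℤ) * ∑ p : C × C, D p ≤ -2 := by
      have h1 : ∑ p : C × C, (D p + D (sw p.1, sw p.2))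
          ≤ ∑ p : C × C, (if p = (c, c') ∨ p = (c', c) then (-1:ℤ) else 0) :=
        Finset.sum_le_sum (fun p _ => hpt p)
      have h2 : ∑ p : C × C, (D p + D (sw p.1, sw p.2))
          = 2 * ∑ p : C × C, D p := by
        rw [Finset.sum_add_distrib, hφsum]; ring
      rw [h2, hsum3] at h1
      exact h1
    have hd : ∑ p : C × C, D p = (KT X S3 : ℤ) - (KT X Rhat : ℤ) := by
      rw [KT_eq_sum X S3, KT_eq_sum X Rhat, ← Finset.sum_sub_distrib]
    have hRS : KT X Rhat ≤ KT X S3 := hopt S3 hext3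
    omega
  intro c hc c' hc'
  constructor
  · exact key c hc c' hc'
  · intro hX
    rcases lt_trichotomy (Rhat.symm c) (Rhat.symm c') with h | h | h
    · exact h
    · have : c = c' := Rhat.symm.injective h
      rw [this] at hX
      exact absurd hX (lt_irrefl _)
    · exact absurd hX (key c' hc' c hc h).asymm
end

section
/- Let X be a ranking over a finite set C, C' ⊆ C, and R a ranking over C'. Swapping two adjacent candidates c, c' in an extension R̂ of R with c, c' ∈ C \ C', c preceding c' in X but c' preceding c in R̂, strictly decreases KT(X, R̂) when c and c' are adjacent in R̂; more generally, exchanging the positions of such c and c' (with arbitrary candidates between them) never increases KT(X, R̂) restricted to pairs involving c or c', and strictly decreases the total distance. -/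
/-- Kendall tau distance restricted to pairs involving `c` or `c'`. -/
def KTon {n : ℕ} {C : Type} [Fintype C] [DecidableEq C] (c c' : C)
    (π π' : Fin n ≃ C) : ℕ :=
  ((Finset.univ : Finset (C × C)).filter
    (fun p => (p.1 = c ∨ p.1 = c' ∨ p.2 = c ∨ p.2 = c') ∧
      π.symm p.1 < π.symm p.2 ∧ π'.symm p.2 < π'.symm p.1)).card

lemma card_le_aux {α : Type*} [DecidableEq α] (A B : Finset α) (φ : α → α)
    (hmap : ∀ q ∈ A \ B, φ q ∈ B \ A)
    (hinj : ∀ q ∈ A \ B, ∀ r ∈ A \ B, φ q = φ r → q = r) :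
    A.card ≤ B.card := by
  have h1 : (A \ B).card ≤ (B \ A).card :=
    Finset.card_le_card_of_injOn φ hmap (fun q hq r hr h => hinj q hq r hr h)
  have hA := Finset.card_inter_add_card_sdiff A B
  have hB := Finset.card_inter_add_card_sdiff B A
  have hic : (A ∩ B).card = (B ∩ A).card := by rw [Finset.inter_comm]
  omega

lemma card_lt_aux {α : Type*} [DecidableEq α] (A B : Finset α) (φ : α → α) (x : α)
    (hmap : ∀ q ∈ A \ B, φ q ∈ B \ A)
    (hinj : ∀ q ∈ A \ B, ∀ r ∈ A \ B, φ q = φ r → q = r)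
    (hx : x ∈ B \ A) (hximg : ∀ q ∈ A \ B, φ q ≠ x) :
    A.card < B.card := by
  have h1 : (A \ B).card ≤ ((B \ A).erase x).card := by
    apply Finset.card_le_card_of_injOn φ
    · intro q hq; exact Finset.mem_erase.mpr ⟨hximg q hq, hmap q hq⟩
    · exact fun q hq r hr h => hinj q hq r hr h
  have h2 : ((B \ A).erase x).card < (B \ A).card := Finset.card_erase_lt_of_mem hx
  have hA := Finset.card_inter_add_card_sdiff A B
  have hB := Finset.card_inter_add_card_sdiff B A
  have hic : (A ∩ B).card = (B ∩ A).card := by rw [Finset.inter_comm]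
  omega

/-- Let `Rhat` be an extension (a ranking over all of `C`) and `c, c' ∈ C \ C'`
with `c` preceding `c'` in `X` but `c'` preceding `c` in `Rhat`.  Exchanging
the positions of `c` and `c'` (with arbitrary candidates in between; the
adjacent case is the special case with none) never increases the Kendall tau
distance to `X` restricted to pairs involving `c` or `c'`, and strictly
decreases the total Kendall tau distance to `X`. -/
theorem exchange_reversed_pair_decreases {n : ℕ} {C : Type} [Fintype C] [DecidableEq C]
    (X : Fin n ≃ C) (C' : Finset C) (Rhat : Fin n ≃ C) (c c' : C)
    (hc : c ∉ C') (hc' : c' ∉ C')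
    (hX : X.symm c < X.symm c') (hR : Rhat.symm c' < Rhat.symm c) :
    KTon c c' X (Rhat.trans (Equiv.swap c c')) ≤ KTon c c' X Rhat ∧
    KT X (Rhat.trans (Equiv.swap c c')) < KT X Rhat := by
  classical
  set s := Equiv.swap c c' with hs
  have hsc : s c = c' := Equiv.swap_apply_left c c'
  have hsc' : s c' = c := Equiv.swap_apply_right c c'
  have hsne : ∀ x : C, x ≠ c → x ≠ c' → s x = x :=
    fun x h h' => Equiv.swap_apply_of_ne_of_ne h h'
  have hss : ∀ x : C, s (s x) = x := fun x => Equiv.swap_apply_self c c' x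
  have hcc' : c ≠ c' := fun h => absurd hX (by rw [h]; exact lt_irrefl _)
  have hg : ∀ x : C, (Rhat.trans s).symm x = Rhat.symm (s x) := by
    intro x
    rw [Equiv.symm_trans_apply, hs, Equiv.symm_swap]
  -- the swapped-index discordant sets
  set A : Finset (C × C) := Finset.univ.filter
    (fun q : C × C => X.symm (s q.1) < X.symm (s q.2) ∧ Rhat.symm q.2 < Rhat.symm q.1)
    with hA
  set B : Finset (C × C) := Finset.univ.filter
    (fun q : C × C => X.symm q.1 < X.symm q.2 ∧ Rhat.symm q.2 < Rhat.symm q.1)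
    with hB
  set I : Finset (C × C) := Finset.univ.filter
    (fun q : C × C => q.1 = c ∨ q.1 = c' ∨ q.2 = c ∨ q.2 = c') with hI
  -- transfer of the "involves c or c'" predicate along s
  have hsw : ∀ x : C, (s x = c ∨ s x = c') ↔ (x = c ∨ x = c') := by
    intro x
    constructor
    · rintro (h | h)
      · right; exact s.injective (h.trans hsc'.symm)
      · left; exact s.injective (h.trans hsc.symm)
    · rintro (h | h) <;> subst h <;> simp [hsc, hsc']
  -- KT and KTon of the swapped ranking as cards of A, A ∩ I
  have hKTA : KT X (Rhat.trans s) = A.card := by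
    unfold KT
    apply Finset.card_bij' (i := fun p _ => (s p.1, s p.2)) (j := fun q _ => (s q.1, s q.2))
    · intro p hp
      simp only [Finset.mem_filter, Finset.mem_univ, true_and, hg] at hp
      simp only [hA, Finset.mem_filter, Finset.mem_univ, true_and, hss]
      exact ⟨hp.1, hp.2⟩
    · intro q hq
      simp only [hA, Finset.mem_filter, Finset.mem_univ, true_and] at hq
      simp only [Finset.mem_filter, Finset.mem_univ, true_and, hg, hss]
      exact ⟨hq.1, hq.2⟩
    · intro p hp; simp [hss]
    · intro q hq; simp [hss]
  have hKTB : KT X Rhat = B.card := rfl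
  have hKTonA : KTon c c' X (Rhat.trans s) = (A ∩ I).card := by
    unfold KTon
    apply Finset.card_bij' (i := fun p _ => (s p.1, s p.2)) (j := fun q _ => (s q.1, s q.2))
    · intro p hp
      simp only [Finset.mem_filter, Finset.mem_univ, true_and, hg] at hp
      simp only [Finset.mem_inter, hA, hI, Finset.mem_filter, Finset.mem_univ, true_and, hss]
      refine ⟨⟨hp.2.1, hp.2.2⟩, ?_⟩
      have := hp.1
      rcases this with h | h | h | h
      · right; left; rw [h, hsc]
      · left; rw [h, hsc']
      · right; right; right; rw [h, hsc]
      · right; right; left; rw [h, hsc']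
    · intro q hq
      simp only [Finset.mem_inter, hA, hI, Finset.mem_filter, Finset.mem_univ, true_and] at hq
      simp only [Finset.mem_filter, Finset.mem_univ, true_and, hg, hss]
      refine ⟨?_, hq.1.1, hq.1.2⟩
      rcases hq.2 with h | h | h | h
      · right; left; rw [h, hsc]
      · left; rw [h, hsc']
      · right; right; right; rw [h, hsc]
      · right; right; left; rw [h, hsc']
    · intro p hp; simp [hss]
    · intro q hq; simp [hss]
  have hKTonB : KTon c c' X Rhat = (B ∩ I).card := by
    unfold KTon
    congr 1
    ext q
    simp only [Finset.mem_inter, hB, hI, Finset.mem_filter, Finset.mem_univ, true_and]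
    tauto
  -- the exchange map
  set φ : C × C → C × C := fun q => if q.2 = c then (q.1, c') else (c, q.2) with hφ
  -- characterization of A \ B
  have hchar : ∀ q : C × C, q ∈ A → q ∉ B →
      (q.2 = c ∧ q.1 ≠ c ∧ q.1 ≠ c' ∧
        X.symm q.1 < X.symm c' ∧ Rhat.symm c < Rhat.symm q.1 ∧ ¬ X.symm q.1 < X.symm c) ∨
      (q.1 = c' ∧ q.2 ≠ c ∧ q.2 ≠ c' ∧
        X.symm c < X.symm q.2 ∧ Rhat.symm q.2 < Rhat.symm c' ∧ ¬ X.symm c' < X.symm q.2) := by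
    intro q hqA hqB
    simp only [hA, Finset.mem_filter, Finset.mem_univ, true_and] at hqA
    simp only [hB, Finset.mem_filter, Finset.mem_univ, true_and] at hqB
    obtain ⟨hQ1, hQ2⟩ := hqA
    have hna : ¬ X.symm q.1 < X.symm q.2 := fun h => hqB ⟨h, hQ2⟩
    by_cases h1 : q.1 = c
    · exfalso
      rw [h1, hsc] at hQ1
      by_cases h2 : q.2 = c
      · rw [h1, h2] at hQ2; exact lt_irrefl _ hQ2
      · by_cases h2' : q.2 = c'
        · rw [h2', hsc'] at hQ1; exact absurd hQ1 (not_lt.mpr (le_of_lt hX))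
        · rw [hsne q.2 h2 h2'] at hQ1
          exact hna (by rw [h1]; exact lt_trans hX hQ1)
    · by_cases h1' : q.1 = c'
      · rw [h1', hsc'] at hQ1
        by_cases h2 : q.2 = c
        · exfalso; rw [h1', h2] at hQ2; exact absurd hQ2 (not_lt.mpr (le_of_lt hR))
        · by_cases h2' : q.2 = c'
          · exfalso; rw [h2', hsc'] at hQ1; exact lt_irrefl _ hQ1
          · right
            rw [hsne q.2 h2 h2'] at hQ1
            rw [h1'] at hQ2 hna
            exact ⟨h1', h2, h2', hQ1, hQ2, hna⟩
      · rw [hsne q.1 h1 h1'] at hQ1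
        by_cases h2 : q.2 = c
        · left
          rw [h2, hsc] at hQ1
          rw [h2] at hQ2 hna
          exact ⟨h2, h1, h1', hQ1, hQ2, hna⟩
        · exfalso
          by_cases h2' : q.2 = c'
          · rw [h2', hsc'] at hQ1
            exact hna (by rw [h2']; exact lt_trans hQ1 hX)
          · rw [hsne q.2 h2 h2'] at hQ1
            exact hna hQ1
  -- φ maps A \ B into B \ A
  have hmap : ∀ q ∈ A \ B, φ q ∈ B \ A := by
    intro q hq
    obtain ⟨hqA, hqB⟩ := Finset.mem_sdiff.mp hq
    rcases hchar q hqA hqB with ⟨h2, h1, h1', ha, hf, hna⟩ | ⟨h1, h2, h2', ha, hf, hna⟩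
    · have : φ q = (q.1, c') := by rw [hφ]; simp [h2]
      rw [this]
      rw [Finset.mem_sdiff]
      constructor
      · simp only [hB, Finset.mem_filter, Finset.mem_univ, true_and]
        exact ⟨ha, lt_trans hR hf⟩
      · simp only [hA, Finset.mem_filter, Finset.mem_univ, true_and, hsc', hsne q.1 h1 h1']
        intro hcon
        exact hna hcon.1
    · have : φ q = (c, q.2) := by rw [hφ]; simp [h2]
      rw [this]
      rw [Finset.mem_sdiff]
      constructor
      · simp only [hB, Finset.mem_filter, Finset.mem_univ, true_and]
        exact ⟨ha, lt_trans hf hR⟩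
      · simp only [hA, Finset.mem_filter, Finset.mem_univ, true_and, hsc, hsne q.2 h2 h2']
        intro hcon
        exact hna hcon.1
  -- φ always lands in I
  have hmapI : ∀ q : C × C, φ q ∈ I := by
    intro q
    rw [hφ]
    by_cases h2 : q.2 = c
    · simp only [h2, if_pos rfl, hI, Finset.mem_filter, Finset.mem_univ, true_and]
      tauto
    · simp only [if_neg h2, hI, Finset.mem_filter, Finset.mem_univ, true_and]
      tauto
  -- injectivity of φ on A \ B
  have hinj : ∀ q ∈ A \ B, ∀ r ∈ A \ B, φ q = φ r → q = r := by
    intro q hq r hr h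
    obtain ⟨hqA, hqB⟩ := Finset.mem_sdiff.mp hq
    obtain ⟨hrA, hrB⟩ := Finset.mem_sdiff.mp hr
    rcases hchar q hqA hqB with ⟨hq2, hq1, hq1', _⟩ | ⟨hq1, hq2, hq2', _⟩ <;>
      rcases hchar r hrA hrB with ⟨hr2, hr1, hr1', _⟩ | ⟨hr1, hr2, hr2', _⟩ <;>
      simp only [hφ] at h
    · rw [if_pos hq2, if_pos hr2] at h
      simp only [Prod.mk.injEq] at h
      exact Prod.ext_iff.mpr ⟨h.1, hq2.trans hr2.symm⟩
    · rw [if_pos hq2, if_neg hr2] at h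
      simp only [Prod.mk.injEq] at h
      exact absurd h.1 hq1
    · rw [if_neg hq2, if_pos hr2] at h
      simp only [Prod.mk.injEq] at h
      exact absurd h.2 hq2'
    · rw [if_neg hq2, if_neg hr2] at h
      simp only [Prod.mk.injEq] at h
      exact Prod.ext_iff.mpr ⟨hq1.trans hr1.symm, h.2⟩
  -- (c, c') is in B \ A but not in the image of φ
  have hx : (c, c') ∈ B \ A := by
    rw [Finset.mem_sdiff]
    constructor
    · simp only [hB, Finset.mem_filter, Finset.mem_univ, true_and]
      exact ⟨hX, hR⟩
    · simp only [hA, Finset.mem_filter, Finset.mem_univ, true_and, hsc, hsc']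
      intro hcon
      exact absurd hcon.1 (not_lt.mpr (le_of_lt hX))
  have hximg : ∀ q ∈ A \ B, φ q ≠ (c, c') := by
    intro q hq h
    obtain ⟨hqA, hqB⟩ := Finset.mem_sdiff.mp hq
    rcases hchar q hqA hqB with ⟨hq2, hq1, hq1', _⟩ | ⟨hq1, hq2, hq2', _⟩ <;>
      rw [hφ] at h
    · simp only [hq2, if_pos rfl] at h
      exact hq1 (congrArg Prod.fst h)
    · simp only [if_neg hq2] at h
      exact hq2' (congrArg Prod.snd h)
  constructor
  · rw [hKTonA, hKTonB]
    apply card_le_aux (A ∩ I) (B ∩ I) φ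
    · intro q hq
      have hq' : q ∈ A \ B := by
        rw [Finset.mem_sdiff] at hq ⊢
        rw [Finset.mem_inter] at hq
        exact ⟨hq.1.1, fun h => hq.2 (Finset.mem_inter.mpr ⟨h, hq.1.2⟩)⟩
      have := hmap q hq'
      rw [Finset.mem_sdiff] at this ⊢
      refine ⟨Finset.mem_inter.mpr ⟨this.1, hmapI q⟩, ?_⟩
      intro hcon
      exact this.2 (Finset.mem_inter.mp hcon).1
    · intro q hq r hr h
      apply hinj q _ r _ h <;>
      · rw [Finset.mem_sdiff] at *
        first
        | (rw [Finset.mem_inter] at hq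
           exact ⟨hq.1.1, fun hh => hq.2 (Finset.mem_inter.mpr ⟨hh, hq.1.2⟩)⟩)
        | (rw [Finset.mem_inter] at hr
           exact ⟨hr.1.1, fun hh => hr.2 (Finset.mem_inter.mpr ⟨hh, hr.1.2⟩)⟩)
  · rw [hKTA, hKTB]
    exact card_lt_aux A B φ (c, c') hmap hinj hx hximg
end

section
/- Let X be a ranking over C, C' ⊆ C, and suppose a ranking R̃ over C extends a ranking over C' and agrees with X on C'' = C \ C'. Let Π = X restricted to C''. If Π(i) sits at position (block) t_i among the C'-candidates of R̃ and t_f ≥ t_i is a position minimizing, over all positions ≥ t_i, the number of disagreements between Π(i) and the candidates of C' (measured between R̃ and X), then moving Π(i) together with all Π(ℓ), ℓ > i, located between t_i and t_f, to position t_f (preserving their relative order) does not increase KT(X, R̃). -/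
/-- The block position of the candidate `c` in the ranking `Q`: the number of
`C'`-candidates that precede `c` in `Q` (a 'position' `t` refers to the gap
after the `t`-th candidate of `C'`).  For `a ∈ C'` this is also the rank of
`a` among the candidates of `C'`. -/
def blk {n : ℕ} {C : Type} [Fintype C] (C' : Finset C) (Q : Fin n ≃ C) (c : C) : ℕ :=
  (C'.filter (fun a => Q.symm a < Q.symm c)).card

/-- The number of disagreements (measured between the ranking `Q` and `X`)
between a candidate `c ∉ C'` and the candidates of `C'` if `c` were placed at
block position `t` (the `C'`-candidates keeping their `Q`-order). -/
def disag {n : ℕ} {C : Type} [Fintype C] (C' : Finset C) (X Q : Fin n ≃ C)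
    (c : C) (t : ℕ) : ℕ :=
  (C'.filter (fun a => blk C' Q a < t ∧ X.symm c < X.symm a)).card +
  (C'.filter (fun a => t ≤ blk C' Q a ∧ X.symm a < X.symm c)).card

section aux
variable {n : ℕ} {C : Type} [Fintype C]

lemma blk_le_card (C' : Finset C) (Q : Fin n ≃ C) (c : C) : blk C' Q c ≤ C'.card :=
  Finset.card_filter_le _ _

lemma mixed_order (C' : Finset C) (Q : Fin n ≃ C) {a b : C} (ha : a ∈ C') (hb : b ∉ C') :
    Q.symm a < Q.symm b ↔ blk C' Q a < blk C' Q b := by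
  unfold blk
  constructor
  · intro h
    apply Finset.card_lt_card
    refine ⟨fun x hx => ?_, fun hsub => ?_⟩
    · simp only [Finset.mem_filter] at hx ⊢
      exact ⟨hx.1, hx.2.trans h⟩
    · have := hsub (Finset.mem_filter.mpr ⟨ha, h⟩)
      simp at this
  · intro h
    by_contra hlt
    have hne : a ≠ b := fun e => hb (e ▸ ha)
    have hba : Q.symm b < Q.symm a := by
      rcases lt_trichotomy (Q.symm a) (Q.symm b) with h1 | h1 | h1
      · exact absurd h1 hlt
      · exact absurd (Q.symm.injective h1) hne
      · exact h1
    have hle : (C'.filter fun x => Q.symm x < Q.symm b).card ≤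
        (C'.filter fun x => Q.symm x < Q.symm a).card := by
      apply Finset.card_le_card
      intro x hx
      simp only [Finset.mem_filter] at hx ⊢
      exact ⟨hx.1, hx.2.trans hba⟩
    omega

lemma mixed_order' (C' : Finset C) (Q : Fin n ≃ C) {a b : C} (ha : a ∈ C') (hb : b ∉ C') :
    Q.symm b < Q.symm a ↔ blk C' Q b ≤ blk C' Q a := by
  have hne : a ≠ b := fun e => hb (e ▸ ha)
  have h1 := mixed_order C' Q ha hb
  constructor
  · intro h
    unfold blk
    apply Finset.card_le_card
    intro x hx
    simp only [Finset.mem_filter] at hx ⊢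
    exact ⟨hx.1, hx.2.trans h⟩
  · intro h
    rcases lt_trichotomy (Q.symm a) (Q.symm b) with h' | h' | h'
    · have := h1.mp h'; omega
    · exact absurd (Q.symm.injective h') hne
    · exact h'

lemma blk_congr (C' : Finset C) (Q Q' : Fin n ≃ C)
    (h : ∀ x ∈ C', ∀ y ∈ C', (Q.symm x < Q.symm y ↔ Q'.symm x < Q'.symm y))
    {a : C} (ha : a ∈ C') : blk C' Q a = blk C' Q' a := by
  unfold blk
  congr 1
  apply Finset.filter_congr
  intro x hx
  exact h x hx a ha

lemma mix_eq_disag (C' : Finset C) (X Rt Q : Fin n ≃ C) {b : C} (hb : b ∉ C')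
    (hQ : ∀ x ∈ C', ∀ y ∈ C', (Rt.symm x < Rt.symm y ↔ Q.symm x < Q.symm y)) :
    (C'.filter (fun a =>
        (X.symm a < X.symm b ∧ Q.symm b < Q.symm a) ∨
        (X.symm b < X.symm a ∧ Q.symm a < Q.symm b))).card
      = disag C' X Rt b (blk C' Q b) := by
  unfold disag
  rw [Finset.card_filter, Finset.card_filter, Finset.card_filter,
    ← Finset.sum_add_distrib]
  apply Finset.sum_congr rfl
  intro a ha
  have hblk : blk C' Q a = blk C' Rt a := (blk_congr C' Rt Q hQ ha).symm
  have h1 : Q.symm a < Q.symm b ↔ blk C' Rt a < blk C' Q b := by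
    rw [mixed_order C' Q ha hb, hblk]
  have h2 : Q.symm b < Q.symm a ↔ blk C' Q b ≤ blk C' Rt a := by
    rw [mixed_order' C' Q ha hb, hblk]
  by_cases hA : X.symm a < X.symm b <;> by_cases hB : X.symm b < X.symm a
  · exact absurd (hA.trans hB) (lt_irrefl _)
  · simp [hA, hB, h2, and_comm]
  · simp [hA, hB, h1, and_comm]
  · simp [hA, hB]

lemma disag_split (C' : Finset C) (X Rt : Fin n ≃ C) (d : C) (t tf : ℕ) (h : t ≤ tf) :
    disag C' X Rt d tf +
      (C'.filter (fun a => t ≤ blk C' Rt a ∧ blk C' Rt a < tf ∧ X.symm a < X.symm d)).card =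
    disag C' X Rt d t +
      (C'.filter (fun a => t ≤ blk C' Rt a ∧ blk C' Rt a < tf ∧ X.symm d < X.symm a)).card := by
  unfold disag
  rw [Finset.card_filter, Finset.card_filter, Finset.card_filter, Finset.card_filter,
    Finset.card_filter, Finset.card_filter,
    ← Finset.sum_add_distrib, ← Finset.sum_add_distrib,
    ← Finset.sum_add_distrib, ← Finset.sum_add_distrib]
  apply Finset.sum_congr rfl
  intro a _
  by_cases hA : X.symm d < X.symm a <;> by_cases hB : X.symm a < X.symm d
  · exact absurd (hA.trans hB) (lt_irrefl _)
  · simp only [hA, hB, and_true, and_false, if_false, false_and]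
    split_ifs <;> omega
  · simp only [hA, hB, and_true, and_false, if_false, false_and]
    split_ifs <;> omega
  · simp [hA, hB]

lemma disag_le (C' : Finset C) (X Rt : Fin n ≃ C) (c b : C) (t tf : ℕ) (h : t ≤ tf)
    (hcb : X.symm c ≤ X.symm b)
    (hc : disag C' X Rt c tf ≤ disag C' X Rt c t) :
    disag C' X Rt b tf ≤ disag C' X Rt b t := by
  have kb := disag_split C' X Rt b t tf h
  have kc := disag_split C' X Rt c t tf h
  have hU : (C'.filter (fun a => t ≤ blk C' Rt a ∧ blk C' Rt a < tf ∧ X.symm b < X.symm a)).card ≤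
      (C'.filter (fun a => t ≤ blk C' Rt a ∧ blk C' Rt a < tf ∧ X.symm c < X.symm a)).card := by
    apply Finset.card_le_card
    intro x hx
    simp only [Finset.mem_filter] at hx ⊢
    exact ⟨hx.1, hx.2.1, hx.2.2.1, lt_of_le_of_lt hcb hx.2.2.2⟩
  have hL : (C'.filter (fun a => t ≤ blk C' Rt a ∧ blk C' Rt a < tf ∧ X.symm a < X.symm c)).card ≤
      (C'.filter (fun a => t ≤ blk C' Rt a ∧ blk C' Rt a < tf ∧ X.symm a < X.symm b)).card := by
    apply Finset.card_le_card
    intro x hx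
    simp only [Finset.mem_filter] at hx ⊢
    exact ⟨hx.1, hx.2.1, hx.2.2.1, lt_of_lt_of_le hx.2.2.2 hcb⟩
  omega

lemma KT_decomp [DecidableEq C] (X Q : Fin n ≃ C) (C' : Finset C)
    (hQ : ∀ a ∉ C', ∀ b ∉ C', (X.symm a < X.symm b ↔ Q.symm a < Q.symm b)) :
    KT X Q =
      ((C' ×ˢ C').filter
        (fun p => X.symm p.1 < X.symm p.2 ∧ Q.symm p.2 < Q.symm p.1)).card
      + ∑ b ∈ C'ᶜ,
          (C'.filter (fun a =>
            (X.symm a < X.symm b ∧ Q.symm b < Q.symm a) ∨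
            (X.symm b < X.symm a ∧ Q.symm a < Q.symm b))).card := by
  classical
  unfold KT
  rw [Finset.card_filter, Fintype.sum_prod_type]
  set f : C → C → ℕ := fun a b => if X.symm a < X.symm b ∧ Q.symm b < Q.symm a then 1 else 0 with hf
  have e1 : ∑ a : C, ∑ b : C, f a b =
      (∑ a ∈ C', ∑ b ∈ C', f a b) + (∑ b ∈ C'ᶜ, ∑ a ∈ C', (f a b + f b a))
        + ∑ a ∈ C'ᶜ, ∑ b ∈ C'ᶜ, f a b := by
    rw [← Finset.sum_add_sum_compl C' (fun a => ∑ b : C, f a b)]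
    have hs : ∀ s : Finset C, ∑ a ∈ s, ∑ b : C, f a b
        = ∑ a ∈ s, ∑ b ∈ C', f a b + ∑ a ∈ s, ∑ b ∈ C'ᶜ, f a b := by
      intro s
      rw [← Finset.sum_add_distrib]
      exact Finset.sum_congr rfl fun a _ => (Finset.sum_add_sum_compl C' _).symm
    rw [hs C', hs C'ᶜ]
    have hcomm : ∑ a ∈ C', ∑ b ∈ C'ᶜ, f a b = ∑ b ∈ C'ᶜ, ∑ a ∈ C', f a b :=
      Finset.sum_comm
    have hsplit2 : ∑ b ∈ C'ᶜ, ∑ a ∈ C', (f a b + f b a)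
        = ∑ b ∈ C'ᶜ, ∑ a ∈ C', f a b + ∑ b ∈ C'ᶜ, ∑ a ∈ C', f b a := by
      rw [← Finset.sum_add_distrib]
      exact Finset.sum_congr rfl fun b _ => Finset.sum_add_distrib
    rw [hsplit2, hcomm]
    ring
  rw [e1]
  have e2 : ∑ a ∈ C'ᶜ, ∑ b ∈ C'ᶜ, f a b = 0 := by
    apply Finset.sum_eq_zero
    intro a ha
    apply Finset.sum_eq_zero
    intro b hb
    rw [Finset.mem_compl] at ha hb
    have := hQ a ha b hb
    simp only [hf]
    rw [if_neg]
    rintro ⟨h1, h2⟩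
    exact absurd (this.mp h1) (asymm h2)
  rw [e2, add_zero]
  congr 1
  · rw [Finset.card_filter, Finset.sum_product]
  · apply Finset.sum_congr rfl
    intro b hb
    rw [Finset.card_filter]
    apply Finset.sum_congr rfl
    intro a ha
    simp only [hf]
    by_cases hA : X.symm a < X.symm b <;> by_cases hB : X.symm b < X.symm a
    · exact absurd (hA.trans hB) (lt_irrefl _)
    · simp [hA, hB]
    · simp [hA, hB]
    · simp [hA, hB]

end aux

/-- Let `Rt` be a ranking over `C` that agrees with `X` on `C'' = C \ C'`,
let `c ∈ C''` (the candidate `Π(i)`) sit at block position `blk C' Rt c = t_i`,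
and let `t_f ≥ t_i` minimize, over all positions `≥ t_i`, the number of
disagreements of `c` with the candidates of `C'`.  If `Rs` is the ranking
obtained from `Rt` by moving `c`, together with every `C''`-candidate that is
after `c` in `X` and located between `t_i` and `t_f`, to position `t_f`
(preserving their relative order, hence still agreeing with `X` on `C''` and
with `Rt` on `C'`), then `KT(X, Rs) ≤ KT(X, Rt)`. -/
theorem move_block_not_increase {n : ℕ} {C : Type} [Fintype C]
    (X Rt Rs : Fin n ≃ C) (C' : Finset C) (c : C) (hc : c ∉ C')
    (hagree : ∀ a ∉ C', ∀ b ∉ C', (X.symm a < X.symm b ↔ Rt.symm a < Rt.symm b))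
    (hagree' : ∀ a ∉ C', ∀ b ∉ C', (X.symm a < X.symm b ↔ Rs.symm a < Rs.symm b))
    (hres : ∀ a ∈ C', ∀ b ∈ C', (Rt.symm a < Rt.symm b ↔ Rs.symm a < Rs.symm b))
    (tf : ℕ) (htf₁ : blk C' Rt c ≤ tf) (htf₂ : tf ≤ C'.card)
    (hmin : ∀ t, blk C' Rt c ≤ t → t ≤ C'.card →
      disag C' X Rt c tf ≤ disag C' X Rt c t)
    (hmoved : ∀ b, b ∉ C' → X.symm c ≤ X.symm b →
      blk C' Rt c ≤ blk C' Rt b → blk C' Rt b ≤ tf → blk C' Rs b = tf)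
    (hfixed : ∀ b, b ∉ C' →
      (X.symm b < X.symm c ∨ blk C' Rt b < blk C' Rt c ∨ tf < blk C' Rt b) →
      blk C' Rs b = blk C' Rt b) :
    KT X Rs ≤ KT X Rt := by
  classical
  rw [KT_decomp X Rt C' hagree, KT_decomp X Rs C' hagree']
  have hAeq : ((C' ×ˢ C').filter
        (fun p => X.symm p.1 < X.symm p.2 ∧ Rs.symm p.2 < Rs.symm p.1)).card
      = ((C' ×ˢ C').filter
        (fun p => X.symm p.1 < X.symm p.2 ∧ Rt.symm p.2 < Rt.symm p.1)).card := by
    congr 1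
    apply Finset.filter_congr
    intro p hp
    rw [Finset.mem_product] at hp
    exact and_congr_right fun _ => (hres p.2 hp.2 p.1 hp.1).symm
  rw [hAeq]
  apply Nat.add_le_add_left
  apply Finset.sum_le_sum
  intro b hb
  rw [Finset.mem_compl] at hb
  rw [mix_eq_disag C' X Rt Rt hb (fun x _ y _ => Iff.rfl),
    mix_eq_disag C' X Rt Rs hb hres]
  by_cases hcase : X.symm b < X.symm c ∨ blk C' Rt b < blk C' Rt c ∨ tf < blk C' Rt b
  · rw [hfixed b hb hcase]
  · push_neg at hcase
    obtain ⟨h1, h2, h3⟩ := hcase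
    rw [hmoved b hb h1 h2 h3]
    exact disag_le C' X Rt c b (blk C' Rt b) tf h3 h1
      (hmin (blk C' Rt b) h2 (blk_le_card C' Rt b))
end
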